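/- arXiv:2006.02131 — 3 statements merged into one kernel-verified Lean document; each statement's English description precedes it below -/
import Mathlib

section
/- Let t0 ∈ ℝ and σ > 0. Let f : ℝ → ℝ be continuous with f(s) > 0 for all s > 0. Let α : ℝ → ℝ be continuous with α(t) ≥ 0 for all t ≥ t0, and let ξ : ℝ → ℝ be continuous with ξ(t) > 0 for all t ≥ t0 and such that (sup_{s ∈ [σ, 2σ]} f(s)) · ∫_{t0}^{∞} ξ(t) dt < σ. If v : ℝ → ℝ is differentiable on [t0, ∞) with v(t0) = 2σ and v'(t) = α(t) f(v(t)) − ξ(t) f(v(t)) for all t ≥ t0, then v(t) > σ for all t ≥ t0. -/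
/-! Pick `K > M = sup_{[σ, 2σ]} f` with still `K ∫_{t0}^∞ ξ < σ`. The barrier
`t ↦ 2σ - K ∫_{t0}^t ξ` stays in `(σ, 2σ]` and is a strict lower fence for `v`: wherever `v`
touches it, `v` lies in `[σ, 2σ]`, so `v' ≥ -ξ f(v) ≥ -M ξ > -K ξ`, strictly because `ξ > 0`. -/

open MeasureTheory Set

theorem boundary_le_image_of_deriv_boundary_lt_deriv_Ici {v v' B B' : ℝ → ℝ} {a : ℝ}
    (hv : ∀ t, a ≤ t → HasDerivAt v (v' t) t) (hB : ∀ t, a ≤ t → HasDerivAt B (B' t) t)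
    (ha : B a ≤ v a) (bound : ∀ t, a ≤ t → v t = B t → B' t < v' t) :
    ∀ t, a ≤ t → B t ≤ v t := by
  intro t ht
  have hneg := image_le_of_deriv_right_lt_deriv_boundary' (f := -v) (f' := -v') (B := -B)
    (B' := -B') (a := a) (b := t)
    (fun s hs => (hv s hs.1).continuousAt.neg.continuousWithinAt)
    (fun s hs => (hv s hs.1).neg.hasDerivWithinAt) (neg_le_neg ha)
    (fun s hs => (hB s hs.1).continuousAt.neg.continuousWithinAt)
    (fun s hs => (hB s hs.1).neg.hasDerivWithinAt)
    (fun s hs hvB => neg_lt_neg (bound s hs.1 (neg_inj.mp hvB)))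
    ⟨ht, le_rfl⟩
  exact neg_le_neg_iff.mp hneg

theorem intervalIntegral_le_integral_Ici {f : ℝ → ℝ} {a b : ℝ} (hab : a ≤ b)
    (hf : IntegrableOn f (Ici a)) (hnn : ∀ x, a ≤ x → 0 ≤ f x) :
    ∫ x in a..b, f x ≤ ∫ x in Ici a, f x := by
  rw [intervalIntegral.integral_of_le hab]
  exact setIntegral_mono_set hf
    ((ae_restrict_iff' measurableSet_Ici).2 (.of_forall hnn))
    (Ioc_subset_Icc_self.trans Icc_subset_Ici_self).eventuallyLE

theorem stmt0_general (t0 σ : ℝ) (hσ : 0 < σ)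
    (f : ℝ → ℝ) (hf : Continuous f) (hfpos : ∀ s : ℝ, 0 < s → 0 < f s)
    (α : ℝ → ℝ) (hαnn : ∀ t : ℝ, t0 ≤ t → 0 ≤ α t)
    (ξ : ℝ → ℝ) (hξ : Continuous ξ) (hξpos : ∀ t : ℝ, t0 ≤ t → 0 < ξ t)
    (hξint : IntegrableOn ξ (Ici t0))
    (hsmall : sSup (f '' Icc σ (2 * σ)) * ∫ t in Ici t0, ξ t < σ)
    (v : ℝ → ℝ) (hv0 : v t0 = 2 * σ)
    (hv : ∀ t : ℝ, t0 ≤ t → HasDerivAt v (α t * f (v t) - ξ t * f (v t)) t) :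
    ∀ t : ℝ, t0 ≤ t → σ < v t := by
  set M := sSup (f '' Icc σ (2 * σ))
  have hfM : ∀ s ∈ Icc σ (2 * σ), f s ≤ M := fun s hs =>
    le_csSup (isCompact_Icc.image hf).bddAbove (mem_image_of_mem f hs)
  obtain ⟨K, hMK, hK⟩ : ∃ K, M < K ∧ K * ∫ t in Ici t0, ξ t < σ :=
    (((continuous_id.mul continuous_const).tendsto M).eventually (gt_mem_nhds hsmall)).exists_gt
  have hK0 : 0 ≤ K := ((hfpos σ hσ).trans_le (hfM σ ⟨le_rfl, by linarith⟩)).le.trans hMK.le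
  set B : ℝ → ℝ := fun t => 2 * σ - K * ∫ s in t0..t, ξ s
  have hσB : ∀ t, t0 ≤ t → σ < B t := fun t ht => by
    have := mul_le_mul_of_nonneg_left
      (intervalIntegral_le_integral_Ici ht hξint fun s hs => (hξpos s hs).le) hK0
    simp only [B]
    linarith
  have hB2σ : ∀ t, t0 ≤ t → B t ≤ 2 * σ := fun t ht => by
    have := mul_nonneg hK0 (intervalIntegral.integral_nonneg (μ := volume) ht
      fun s hs => (hξpos s hs.1).le)
    simp only [B]
    linarith
  have hBv : ∀ t, t0 ≤ t → B t ≤ v t := by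
    refine boundary_le_image_of_deriv_boundary_lt_deriv_Ici hv
      (fun t _ => ((hξ.integral_hasStrictDerivAt t0 t).hasDerivAt.const_mul K).const_sub (2 * σ))
      (by simp [B, hv0]) fun t ht hvB => ?_
    have hvt : v t ∈ Icc σ (2 * σ) := hvB ▸ ⟨(hσB t ht).le, hB2σ t ht⟩
    have hαf := mul_nonneg (hαnn t ht) (hfpos _ (hσ.trans_le hvt.1)).le
    have hξf := mul_lt_mul_of_pos_left ((hfM _ hvt).trans_lt hMK) (hξpos t ht)
    linarith
  exact fun t ht => (hσB t ht).trans_le (hBv t ht)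

/-- Lower bound (24): the solution of the perturbed separable ODE
`v' = (α(t) − ξ(t)) f(v)`, `v(t0) = 2σ`, stays above `σ`, provided
`(sup_{[σ,2σ]} f) · ∫_{t0}^∞ ξ < σ`. -/
theorem stmt0 (t0 σ : ℝ) (hσ : 0 < σ)
    (f : ℝ → ℝ) (hf : Continuous f) (hfpos : ∀ s : ℝ, 0 < s → 0 < f s)
    (α : ℝ → ℝ) (hα : Continuous α) (hαnn : ∀ t : ℝ, t0 ≤ t → 0 ≤ α t)
    (ξ : ℝ → ℝ) (hξ : Continuous ξ) (hξpos : ∀ t : ℝ, t0 ≤ t → 0 < ξ t)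
    (hξint : IntegrableOn ξ (Ici t0))
    (hsmall : sSup (f '' Icc σ (2 * σ)) * ∫ t in Ici t0, ξ t < σ)
    (v : ℝ → ℝ) (hv0 : v t0 = 2 * σ)
    (hv : ∀ t : ℝ, t0 ≤ t → HasDerivAt v (α t * f (v t) - ξ t * f (v t)) t) :
    ∀ t : ℝ, t0 ≤ t → σ < v t :=
  stmt0_general t0 σ hσ f hf hfpos α hαnn ξ hξ hξpos hξint hsmall v hv0 hv
end

section
/- Let t0 ∈ ℝ and σ > 0. Let f : ℝ → ℝ be continuous with f(s) > 0 for all s > 0 and ∫_{a}^{∞} ds / f(s) < ∞ for some (equivalently every) a > 0. Let α : ℝ → ℝ be continuous with α(t) ≥ 0 for all t ≥ t0 and ∫_{t0}^{∞} α(t) dt = ∞. Let ξ : ℝ → ℝ be continuous with ξ(t) > 0 for all t ≥ t0 and (sup_{s ∈ [σ, 2σ]} f(s)) · ∫_{t0}^{∞} ξ(t) dt < σ. Then there exists no function v : ℝ → ℝ that is differentiable on all of [t0, ∞) and satisfies v(t0) = 2σ and v'(t) = α(t) f(v(t)) − ξ(t) f(v(t)) for all t ≥ t0; i.e., every solution of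 this initial value problem blows up in finite time. -/
open MeasureTheory Set

/-!
While `v` stays in `[σ, 2σ]` we have `v' ≥ -M ξ` for any `M > sup_{[σ,2σ]} f`, so `v` cannot fall
below the barrier `2σ - M ∫_{t0}^t ξ`, which itself stays above `σ` when `M ∫ ξ < σ`.
Hence `v ≥ σ > 0` throughout, and separating variables gives
`∫_{t0}^T (α - ξ) = ∫_{2σ}^{v T} ds / f(s) ≤ ∫_σ^∞ ds / f(s)`,
which bounds `∫_{t0}^T α` uniformly in `T`, contradicting its divergence.
-/

theorem intervalIntegral_le_integral_Ioi {g : ℝ → ℝ} {a c x : ℝ} (hg : IntegrableOn g (Ioi a))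
    (hg_nonneg : ∀ s, a ≤ s → 0 ≤ g s) (hc : a ≤ c) (hx : a ≤ x) :
    ∫ s in c..x, g s ≤ ∫ s in Ioi a, g s := by
  have hint_nonneg : 0 ≤ ∫ s in Ioi a, g s :=
    setIntegral_nonneg measurableSet_Ioi fun s hs => hg_nonneg s hs.le
  rcases le_total c x with hcx | hxc
  · rw [intervalIntegral.integral_of_le hcx]
    refine setIntegral_mono_set hg ?_ (Ioc_subset_Ioi_self.trans (Ioi_subset_Ioi hc)).eventuallyLE
    filter_upwards [ae_restrict_mem measurableSet_Ioi] with s hs using hg_nonneg s hs.le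
  · have : 0 ≤ ∫ s in x..c, g s :=
      intervalIntegral.integral_nonneg hxc fun s hs => hg_nonneg s (hx.trans hs.1)
    rw [intervalIntegral.integral_symm]
    linarith

theorem integrableOn_Ioi_of_continuousOn_Icc {g : ℝ → ℝ} {a b : ℝ}
    (hg : ContinuousOn g (Icc b a)) (ha : IntegrableOn g (Ioi a)) : IntegrableOn g (Ioi b) := by
  rcases le_total a b with hab | hba
  · exact ha.mono_set (Ioi_subset_Ioi hab)
  · rw [← Ioc_union_Ioi_eq_Ioi hba]
    exact (hg.integrableOn_Icc.mono_set Ioc_subset_Icc_self).union ha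

theorem integral_eq_integral_inv_of_hasDerivAt_mul {f β v : ℝ → ℝ} {t0 T : ℝ}
    (hf : Continuous f) (hβ : Continuous β) (hT : t0 ≤ T)
    (hfv : ∀ t ∈ Icc t0 T, f (v t) ≠ 0)
    (hv : ∀ t ∈ Icc t0 T, HasDerivAt v (β t * f (v t)) t) :
    ∫ t in t0..T, β t = ∫ s in v t0..v T, (f s)⁻¹ := by
  rw [← uIcc_of_le hT] at hfv hv
  have hv_cont : ContinuousOn v (uIcc t0 T) := fun t ht => (hv t ht).continuousAt.continuousWithinAt
  rw [← intervalIntegral.integral_comp_mul_deriv' hv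
    (hβ.continuousOn.mul (hf.comp_continuousOn hv_cont))]
  · refine intervalIntegral.integral_congr fun t ht => ?_
    simp only [Function.comp_apply]
    field_simp [hfv t ht]
  · rintro _ ⟨t, ht, rfl⟩
    exact (hf.continuousAt.inv₀ (hfv t ht)).continuousWithinAt

/-- The strict bounds `f < M` and `ξ > 0` make the barrier strictly slower than `v` at every
contact point, which is what the comparison principle needs. -/
theorem sub_mul_integral_le_of_hasDerivAt {f α ξ v : ℝ → ℝ} {t0 a c M : ℝ}
    (hξ : Continuous ξ) (hα_nonneg : ∀ t, t0 ≤ t → 0 ≤ α t) (hξ_pos : ∀ t, t0 ≤ t → 0 < ξ t)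
    (hf_nonneg : ∀ s ∈ Icc a c, 0 ≤ f s) (hf_lt : ∀ s ∈ Icc a c, f s < M)
    (hbarrier : ∀ t, t0 ≤ t → a ≤ c - M * ∫ u in t0..t, ξ u)
    (hv0 : v t0 = c) (hv : ∀ t, t0 ≤ t → HasDerivAt v ((α t - ξ t) * f (v t)) t) :
    ∀ t, t0 ≤ t → c - M * ∫ u in t0..t, ξ u ≤ v t := by
  intro T hT
  set b : ℝ → ℝ := fun t => c - M * ∫ u in t0..t, ξ u
  have hb : ∀ t, HasDerivAt b (-(M * ξ t)) t := fun t =>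
    (((hξ.integral_hasStrictDerivAt t0 t).hasDerivAt.const_mul M).const_sub c)
  have hac : a ≤ c := by simpa using hbarrier t0 le_rfl
  have hM : 0 < M := (hf_nonneg c ⟨hac, le_rfl⟩).trans_lt (hf_lt c ⟨hac, le_rfl⟩)
  refine image_le_of_deriv_right_lt_deriv_boundary' (f := b) (B := v)
    (fun t _ => (hb t).continuousAt.continuousWithinAt) (fun t _ => (hb t).hasDerivWithinAt)
    (by simp [b, hv0]) (fun t ht => (hv t ht.1).continuousAt.continuousWithinAt)
    (fun t ht => (hv t ht.1).hasDerivWithinAt) ?_ ⟨hT, le_rfl⟩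
  rintro t ⟨ht, -⟩ hbv
  have hint_nonneg : 0 ≤ ∫ u in t0..t, ξ u :=
    intervalIntegral.integral_nonneg ht fun u hu => (hξ_pos u hu.1).le
  have hvt : v t ∈ Icc a c := by
    rw [← hbv]
    exact ⟨hbarrier t ht, sub_le_self c (mul_nonneg hM.le hint_nonneg)⟩
  have hαf := mul_nonneg (hα_nonneg t ht) (hf_nonneg _ hvt)
  have hξf := mul_lt_mul_of_pos_left (hf_lt _ hvt) (hξ_pos t ht)
  linarith [sub_mul (α t) (ξ t) (f (v t))]

theorem integral_le_integral_Ioi_inv_add_of_hasDerivAt {f α ξ v : ℝ → ℝ} {t0 σ T : ℝ}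
    (hf : Continuous f) (hf_pos : ∀ s, σ ≤ s → 0 < f s)
    (hf_inv : IntegrableOn (fun s => (f s)⁻¹) (Ioi σ)) (hα : Continuous α) (hξ : Continuous ξ)
    (hT : t0 ≤ T) (hvσ : ∀ t ∈ Icc t0 T, σ ≤ v t)
    (hv : ∀ t ∈ Icc t0 T, HasDerivAt v ((α t - ξ t) * f (v t)) t) :
    ∫ t in t0..T, α t ≤ (∫ s in Ioi σ, (f s)⁻¹) + ∫ t in t0..T, ξ t := by
  have hsep := integral_eq_integral_inv_of_hasDerivAt_mul (β := fun t => α t - ξ t) hf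
    (hα.sub hξ) hT (fun t ht => (hf_pos _ (hvσ t ht)).ne') hv
  rw [intervalIntegral.integral_sub (hα.intervalIntegrable _ _) (hξ.intervalIntegrable _ _)]
    at hsep
  have hinv := intervalIntegral_le_integral_Ioi hf_inv (fun s hs => inv_nonneg.2 (hf_pos s hs).le)
    (hvσ t0 ⟨le_rfl, hT⟩) (hvσ T ⟨hT, le_rfl⟩)
  linarith

open Filter Topology in
theorem exists_gt_mul_lt_of_mul_lt {M I σ : ℝ} (h : M * I < σ) : ∃ M' > M, M' * I < σ := by
  have hnear : ∀ᶠ m in 𝓝[>] M, M < m ∧ m * I < σ :=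
    Filter.Eventually.and self_mem_nhdsWithin <| nhdsWithin_le_nhds <|
      ((continuous_mul_const I).tendsto M).eventually (gt_mem_nhds h)
  exact hnear.exists

/-- Core ODE blow-up assertion for the auxiliary problem (23): when
`∫^∞ ds/f(s) < ∞`, `∫_{t0}^∞ α = ∞` and the perturbation `ξ` is small
(`(sup_{[σ,2σ]} f) ∫_{t0}^∞ ξ < σ`), the solution of
`v' = (α(t) − ξ(t)) f(v)`, `v(t0) = 2σ` cannot exist globally in time. -/
theorem stmt2 (t0 σ : ℝ) (hσ : 0 < σ)
    (f : ℝ → ℝ) (hf : Continuous f) (hfpos : ∀ s : ℝ, 0 < s → 0 < f s)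
    (hfint : ∃ a : ℝ, 0 < a ∧ IntegrableOn (fun s => (f s)⁻¹) (Ioi a))
    (α : ℝ → ℝ) (hα : Continuous α) (hαnn : ∀ t : ℝ, t0 ≤ t → 0 ≤ α t)
    (hαdiv : Filter.Tendsto (fun T => ∫ t in t0..T, α t) Filter.atTop Filter.atTop)
    (ξ : ℝ → ℝ) (hξ : Continuous ξ) (hξpos : ∀ t : ℝ, t0 ≤ t → 0 < ξ t)
    (hξint : IntegrableOn ξ (Ici t0))
    (hsmall : sSup (f '' Icc σ (2 * σ)) * ∫ t in Ici t0, ξ t < σ) :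
    ¬ ∃ v : ℝ → ℝ, v t0 = 2 * σ ∧
        ∀ t : ℝ, t0 ≤ t → HasDerivAt v (α t * f (v t) - ξ t * f (v t)) t := by
  rintro ⟨v, hv0, hv⟩
  obtain ⟨a, -, hfa⟩ := hfint
  set M := sSup (f '' Icc σ (2 * σ))
  set I := ∫ t in Ici t0, ξ t with hI_def
  have hξI : ∀ T, t0 ≤ T → ∫ t in t0..T, ξ t ≤ I := fun T hT => by
    rw [hI_def, integral_Ici_eq_integral_Ioi]
    exact intervalIntegral_le_integral_Ioi (hξint.mono_set Ioi_subset_Ici_self)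
      (fun t ht => (hξpos t ht).le) le_rfl hT
  have hfM : ∀ s ∈ Icc σ (2 * σ), f s ≤ M := fun s hs =>
    le_csSup (isCompact_Icc.image hf).bddAbove (mem_image_of_mem f hs)
  obtain ⟨M', hMM', hM'I⟩ := exists_gt_mul_lt_of_mul_lt hsmall
  have hM' : 0 < M' := ((hfpos σ hσ).trans_le (hfM σ ⟨le_rfl, by linarith⟩)).trans hMM'
  have hv' : ∀ t, t0 ≤ t → HasDerivAt v ((α t - ξ t) * f (v t)) t := fun t ht =>
    (hv t ht).congr_deriv (sub_mul _ _ _).symm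
  have hvσ : ∀ t, t0 ≤ t → σ ≤ v t := fun t ht => by
    have hbarrier : ∀ s, t0 ≤ s → σ ≤ 2 * σ - M' * ∫ u in t0..s, ξ u := fun s hs => by
      nlinarith [mul_le_mul_of_nonneg_left (hξI s hs) hM'.le]
    exact (hbarrier t ht).trans <| sub_mul_integral_le_of_hasDerivAt hξ hαnn hξpos
      (fun s hs => (hfpos s (hσ.trans_le hs.1)).le) (fun s hs => (hfM s hs).trans_lt hMM')
      hbarrier hv0 hv' t ht
  have hfinv : IntegrableOn (fun s => (f s)⁻¹) (Ioi σ) :=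
    integrableOn_Ioi_of_continuousOn_Icc (fun s hs =>
      (hf.continuousAt.inv₀ (hfpos s (hσ.trans_le hs.1)).ne').continuousWithinAt) hfa
  have hbound : ∀ T, t0 ≤ T → ∫ t in t0..T, α t ≤ (∫ s in Ioi σ, (f s)⁻¹) + I := fun T hT =>
    (integral_le_integral_Ioi_inv_add_of_hasDerivAt hf (fun s hs => hfpos s (hσ.trans_le hs))
      hfinv hα hξ hT (fun t ht => hvσ t ht.1) (fun t ht => hv' t ht.1)).trans
      (add_le_add_right (hξI T hT) _)
  obtain ⟨T, hT, hT0⟩ := ((hαdiv.eventually_gt_atTop _).and (Filter.eventually_ge_atTop t0)).exists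
  exact (hbound T hT0).not_gt hT
end

section
/- Let a > 0, ε > 0, and Y ≥ 1 with εY < a. Let f : ℝ → ℝ be continuous, positive and nondecreasing on (0, a]. Let α, η : ℝ → ℝ be continuous with α(t) ≥ 0 and η(t) > 0 for t ≥ 0, ∫_{0}^{∞} (α(t) + η(t)) dt < ∞, and ∫_{εY}^{a} ds / f(s) > Y ∫_{0}^{∞} (α(t) + η(t)) dt. Then there exists a function z : ℝ → ℝ, differentiable on [0, ∞), such that z(0) = 1; ∫_{εY}^{εY z(t)} ds / f(s) = Y ∫_{0}^{t} (α(τ) + η(τ)) dτ for all t ≥ 0; z'(t) = (1/ε) (α(t) + η(t)) f(εY z(t)) for all t ≥ 0; and 1 ≤ z(t) and εY z(t) < a for all t ≥ 0. -/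
/-!
Separation of variables: with `F x = ∫_{εY}^x ds / f s`, take `z t = F⁻¹ (Y ∫_0^t (α + η)) / (εY)`.
The argument of `F⁻¹` lies in `[0, Y ∫_0^∞ (α + η)) ⊆ [0, F a)`, so `εY z t ∈ [εY, a)`, and the
inverse function theorem gives `(εY z)' = Y (α + η) f (εY z)`. To invert `F` globally, `1 / f` is
extended from `[εY, a]` to `ℝ` by constants; the extension is bounded below by a positive
constant, so its primitive grows at least linearly in both directions and is an order
isomorphism of `ℝ`.
-/

open MeasureTheory Set Filter

theorem exists_pos_forall_le_IccExtend {a b : ℝ} (h : a ≤ b) {u : Icc a b → ℝ}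
    (hu : Continuous u) (hpos : ∀ x, 0 < u x) : ∃ m, 0 < m ∧ ∀ x, m ≤ IccExtend h u x := by
  have : Nonempty (Icc a b) := ⟨⟨a, left_mem_Icc.2 h⟩⟩
  obtain ⟨x₀, -, hx₀⟩ := isCompact_univ.exists_isMinOn univ_nonempty hu.continuousOn
  exact ⟨u x₀, hpos x₀, fun x => hx₀ (mem_univ _)⟩

theorem intervalIntegral_le_integral_Ioi_s9 {u : ℝ → ℝ} {b t : ℝ} (hbt : b ≤ t)
    (hu : IntegrableOn u (Ioi b)) (hnn : ∀ τ, b < τ → 0 ≤ u τ) :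
    ∫ τ in b..t, u τ ≤ ∫ τ in Ioi b, u τ := by
  rw [intervalIntegral.integral_of_le hbt]
  exact setIntegral_mono_set hu
    ((ae_restrict_iff' measurableSet_Ioi).2 (ae_of_all _ hnn)) Ioc_subset_Ioi_self.eventuallyLE

section IntegralOrderIso

variable {g : ℝ → ℝ} {m : ℝ}

theorem mul_sub_le_integral_sub (hg : Continuous g) (hgm : ∀ x, m ≤ g x) (c : ℝ) {x y : ℝ}
    (hxy : x ≤ y) : m * (y - x) ≤ (∫ s in c..y, g s) - ∫ s in c..x, g s :=
  mul_sub_le_image_sub_of_le_deriv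
    (fun x => (hg.integral_hasStrictDerivAt c x).hasDerivAt.differentiableAt)
    (fun x => (hg.integral_hasStrictDerivAt c x).hasDerivAt.deriv ▸ hgm x) hxy

theorem strictMono_integral_of_forall_le (hg : Continuous g) (hm : 0 < m) (hgm : ∀ x, m ≤ g x)
    (c : ℝ) : StrictMono fun x => ∫ s in c..x, g s := fun x y hxy => by
  have := mul_sub_le_integral_sub hg hgm c hxy.le
  nlinarith [mul_pos hm (sub_pos.2 hxy)]

theorem surjective_integral_of_forall_le (hg : Continuous g) (hm : 0 < m)
    (hgm : ∀ x, m ≤ g x) (c : ℝ) : Function.Surjective fun x => ∫ s in c..x, g s := by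
  have hcont : Continuous fun x => ∫ s in c..x, g s :=
    intervalIntegral.continuous_primitive (fun _ _ => hg.intervalIntegrable _ _) c
  refine hcont.surjective ?_ ?_
  · refine tendsto_atTop_mono' _ ((eventually_ge_atTop 0).mono fun x hx => ?_)
      (tendsto_atTop_add_const_left _ (∫ s in c..0, g s) (tendsto_id.const_mul_atTop hm))
    dsimp only [id]
    linarith [mul_sub_le_integral_sub hg hgm c hx]
  · refine tendsto_atBot_mono' _ ((eventually_le_atBot 0).mono fun x hx => ?_)
      (tendsto_atBot_add_const_left _ (∫ s in c..0, g s) (tendsto_id.const_mul_atBot hm))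
    dsimp only [id]
    linarith [mul_sub_le_integral_sub hg hgm c hx]

noncomputable def integralOrderIso (hg : Continuous g) (hm : 0 < m) (hgm : ∀ x, m ≤ g x)
    (c : ℝ) : ℝ ≃o ℝ :=
  StrictMono.orderIsoOfSurjective _ (strictMono_integral_of_forall_le hg hm hgm c)
    (surjective_integral_of_forall_le hg hm hgm c)

theorem hasDerivAt_integralOrderIso_symm (hg : Continuous g) (hm : 0 < m)
    (hgm : ∀ x, m ≤ g x) (c y : ℝ) :
    HasDerivAt (integralOrderIso hg hm hgm c).symm
      (g ((integralOrderIso hg hm hgm c).symm y))⁻¹ y :=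
  HasDerivAt.of_local_left_inverse (integralOrderIso hg hm hgm c).symm.continuous.continuousAt
    (hg.integral_hasStrictDerivAt c _).hasDerivAt (hm.trans_le (hgm _)).ne'
    (Eventually.of_forall (integralOrderIso hg hm hgm c).apply_symm_apply)

end IntegralOrderIso

theorem exists_inverse_integral_inv {c a : ℝ} {f : ℝ → ℝ} (hca : c ≤ a)
    (hf : ContinuousOn f (Icc c a)) (hfpos : ∀ s ∈ Icc c a, 0 < f s) :
    ∃ Φ : ℝ → ℝ, Φ 0 = c ∧ ∀ y ∈ Ico 0 (∫ s in c..a, (f s)⁻¹),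
      Φ y ∈ Ico c a ∧ ∫ s in c..Φ y, (f s)⁻¹ = y ∧ HasDerivAt Φ (f (Φ y)) y := by
  have hu : Continuous fun s : Icc c a => (f s)⁻¹ :=
    (continuousOn_iff_continuous_domRestrict.1 hf).inv₀ fun s => (hfpos s s.2).ne'
  obtain ⟨m, hm, hgm⟩ :=
    exists_pos_forall_le_IccExtend hca hu fun s => inv_pos.2 (hfpos s s.2)
  set g := IccExtend hca fun s : Icc c a => (f s)⁻¹
  have hgf : ∀ s ∈ Icc c a, g s = (f s)⁻¹ := fun s hs => IccExtend_of_mem hca _ hs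
  set e := integralOrderIso hu.Icc_extend' hm hgm c
  have he : ∀ x ∈ Icc c a, e x = ∫ s in c..x, (f s)⁻¹ := fun x hx =>
    intervalIntegral.integral_congr fun s hs =>
      hgf s ⟨(uIcc_of_le hx.1 ▸ hs).1, (uIcc_of_le hx.1 ▸ hs).2.trans hx.2⟩
  have he0 : e c = 0 := intervalIntegral.integral_same
  refine ⟨e.symm, e.symm_apply_eq.2 he0.symm, fun y hy => ?_⟩
  have hmem : e.symm y ∈ Ico c a :=
    ⟨e.le_symm_apply.2 (he0 ▸ hy.1), e.symm_apply_lt.2 (he a ⟨hca, le_rfl⟩ ▸ hy.2)⟩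
  refine ⟨hmem, (he _ (Ico_subset_Icc_self hmem)).symm.trans (e.apply_symm_apply y), ?_⟩
  have hΦ : HasDerivAt e.symm (g (e.symm y))⁻¹ y :=
    hasDerivAt_integralOrderIso_symm hu.Icc_extend' hm hgm c y
  rwa [hgf _ (Ico_subset_Icc_self hmem), inv_inv] at hΦ

theorem stmt9_general (a ε Y : ℝ) (hε : 0 < ε) (hY : 1 ≤ Y) (hεY : ε * Y < a)
    (f : ℝ → ℝ) (hf : ContinuousOn f (Ioc 0 a))
    (hfpos : ∀ s ∈ Ioc (0:ℝ) a, 0 < f s)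
    (α η : ℝ → ℝ) (hα : Continuous α) (hη : Continuous η)
    (hαnn : ∀ t : ℝ, 0 ≤ t → 0 ≤ α t) (hηpos : ∀ t : ℝ, 0 ≤ t → 0 < η t)
    (hint : IntegrableOn (fun t => α t + η t) (Ioi 0))
    (hsmall : Y * ∫ t in Ioi (0:ℝ), (α t + η t) < ∫ s in (ε * Y)..a, (f s)⁻¹) :
    ∃ z : ℝ → ℝ, z 0 = 1 ∧
      (∀ t : ℝ, 0 ≤ t →
        ∫ s in (ε * Y)..(ε * Y * z t), (f s)⁻¹ = Y * ∫ τ in (0:ℝ)..t, (α τ + η τ)) ∧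
      (∀ t : ℝ, 0 ≤ t → HasDerivAt z ((1 / ε) * (α t + η t) * f (ε * Y * z t)) t) ∧
      (∀ t : ℝ, 0 ≤ t → 1 ≤ z t ∧ ε * Y * z t < a) := by
  have hY0 : 0 < Y := one_pos.trans_le hY
  have hc : 0 < ε * Y := mul_pos hε hY0
  have hIcc : Icc (ε * Y) a ⊆ Ioc 0 a := Icc_subset_Ioc hc le_rfl
  obtain ⟨Φ, hΦ0, hΦ⟩ :=
    exists_inverse_integral_inv hεY.le (hf.mono hIcc) fun s hs => hfpos s (hIcc hs)
  set G := fun t => Y * ∫ τ in (0:ℝ)..t, (α τ + η τ)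
  have hnn : ∀ τ, 0 ≤ τ → 0 ≤ α τ + η τ := fun τ hτ => by linarith [hαnn τ hτ, hηpos τ hτ]
  have hG : ∀ t, 0 ≤ t → G t ∈ Ico 0 (∫ s in (ε * Y)..a, (f s)⁻¹) := fun t ht =>
    ⟨mul_nonneg hY0.le (intervalIntegral.integral_nonneg ht fun τ hτ => hnn τ hτ.1),
      (mul_le_mul_of_nonneg_left (intervalIntegral_le_integral_Ioi_s9 ht hint fun τ hτ =>
        hnn τ hτ.le) hY0.le).trans_lt hsmall⟩
  have hcz : ∀ t, ε * Y * (Φ (G t) / (ε * Y)) = Φ (G t) := fun t => mul_div_cancel₀ _ hc.ne'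
  refine ⟨fun t => Φ (G t) / (ε * Y), by simp [G, hΦ0, hc.ne'], fun t ht => ?_,
    fun t ht => ?_, fun t ht => ?_⟩
  · rw [hcz]
    exact (hΦ _ (hG t ht)).2.1
  · have hGt : HasDerivAt G (Y * (α t + η t)) t :=
      ((hα.add hη).integral_hasStrictDerivAt 0 t).hasDerivAt.const_mul Y
    refine (((hΦ _ (hG t ht)).2.2.comp t hGt).div_const (ε * Y)).congr_deriv ?_
    rw [hcz]
    field_simp
  · obtain ⟨⟨hlow, hhigh⟩, -⟩ := hΦ _ (hG t ht)
    rw [hcz, one_le_div hc]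
    exact ⟨hlow, hhigh⟩

/-- Construction of the time factor `z(t)` of the supersolution in Theorem 3.1:
`z` solves `z' = (1/ε)(α + η) f(εYz)`, `z(0) = 1`, satisfies the implicit
identity `∫_{εY}^{εYz(t)} ds/f(s) = Y ∫_0^t (α + η)`, and `εYz(t)` stays
strictly below `a` while `z(t) ≥ 1` for all `t ≥ 0`. -/
theorem stmt9 (a ε Y : ℝ) (ha : 0 < a) (hε : 0 < ε) (hY : 1 ≤ Y) (hεY : ε * Y < a)
    (f : ℝ → ℝ) (hf : ContinuousOn f (Ioc 0 a))
    (hfpos : ∀ s ∈ Ioc (0:ℝ) a, 0 < f s)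
    (hfmono : ∀ s1 s2 : ℝ, s1 ∈ Ioc (0:ℝ) a → s2 ∈ Ioc (0:ℝ) a → s1 ≤ s2 → f s1 ≤ f s2)
    (α η : ℝ → ℝ) (hα : Continuous α) (hη : Continuous η)
    (hαnn : ∀ t : ℝ, 0 ≤ t → 0 ≤ α t) (hηpos : ∀ t : ℝ, 0 ≤ t → 0 < η t)
    (hint : IntegrableOn (fun t => α t + η t) (Ioi 0))
    (hsmall : Y * ∫ t in Ioi (0:ℝ), (α t + η t) < ∫ s in (ε * Y)..a, (f s)⁻¹) :
    ∃ z : ℝ → ℝ, z 0 = 1 ∧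
      (∀ t : ℝ, 0 ≤ t →
        ∫ s in (ε * Y)..(ε * Y * z t), (f s)⁻¹ = Y * ∫ τ in (0:ℝ)..t, (α τ + η τ)) ∧
      (∀ t : ℝ, 0 ≤ t → HasDerivAt z ((1 / ε) * (α t + η t) * f (ε * Y * z t)) t) ∧
      (∀ t : ℝ, 0 ≤ t → 1 ≤ z t ∧ ε * Y * z t < a) :=
  stmt9_general a ε Y hε hY hεY f hf hfpos α η hα hη hαnn hηpos hint hsmall
end
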